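/- Monotonicity of the quadratic relative entropy: for a completely positive trace-preserving map φ and positive definite density matrices P, Q with φ(P) positive definite, Tr((φ(Q)−φ(P)) φ(P)^{-1} (φ(Q)−φ(P))) ≤ Tr((Q−P) P^{-1}(Q−P)). -/

import Mathlib

/-!
The matrix `[[P, A], [Aᴴ, Aᴴ P⁻¹ A]]` is positive semidefinite, its Schur complement being `0`.
Applying the Kraus operators blockwise keeps it positive semidefinite, so the Schur complement of
the image, `φ(Aᴴ P⁻¹ A) - φ(A)ᴴ φ(P)⁻¹ φ(A)`, is positive semidefinite and has nonnegative trace.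
Trace preservation turns `Tr φ(Aᴴ P⁻¹ A)` into `Tr (Aᴴ P⁻¹ A)`; take `A = Q - P`.
-/

open Matrix
open scoped ComplexOrder

namespace Matrix

variable {ι m n 𝕜 : Type*} [Fintype ι] [Fintype n] [RCLike 𝕜]
  (V : ι → Matrix m n 𝕜)

def krausMap (X : Matrix n n 𝕜) : Matrix m m 𝕜 := ∑ k, V k * X * (V k)ᴴ

lemma krausMap_sub (X Y : Matrix n n 𝕜) : krausMap V (X - Y) = krausMap V X - krausMap V Y := by
  simp only [krausMap, Matrix.mul_sub, Matrix.sub_mul, Finset.sum_sub_distrib]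

lemma conjTranspose_krausMap (X : Matrix n n 𝕜) : (krausMap V X)ᴴ = krausMap V Xᴴ := by
  simp only [krausMap, conjTranspose_sum, conjTranspose_mul, conjTranspose_conjTranspose,
    Matrix.mul_assoc]

lemma trace_krausMap [Fintype m] [DecidableEq n] {V : ι → Matrix m n 𝕜}
    (hV : ∑ k, (V k)ᴴ * V k = 1) (X : Matrix n n 𝕜) : (krausMap V X).trace = X.trace := by
  simp only [krausMap, trace_sum, Matrix.mul_assoc, trace_mul_comm (V _)]
  rw [← trace_sum, ← Finset.mul_sum, hV, Matrix.mul_one]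

lemma PosSemidef.krausMap [Fintype m] {X : Matrix n n 𝕜} (hX : X.PosSemidef) :
    (krausMap V X).PosSemidef :=
  posSemidef_sum _ fun k _ => hX.mul_mul_conjTranspose_same (V k)

lemma krausMap_fromBlocks (A B C D : Matrix n n 𝕜) :
    krausMap (fun k => fromBlocks (V k) 0 0 (V k)) (fromBlocks A B C D) =
      fromBlocks (krausMap V A) (krausMap V B) (krausMap V C) (krausMap V D) := by
  ext (i | i) (j | j) <;>
    simp [krausMap, fromBlocks_multiply, fromBlocks_conjTranspose, Matrix.sum_apply]

/-- The Schwarz-type inequality of Lieb and Ruskai for completely positive maps. -/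
theorem posSemidef_krausMap_sub_conjTranspose_mul_inv_mul [Fintype m] [DecidableEq m]
    [DecidableEq n] {P : Matrix n n 𝕜} (hP : P.PosDef) (hVP : (krausMap V P).PosDef)
    (A : Matrix n n 𝕜) :
    (krausMap V (Aᴴ * P⁻¹ * A) -
      (krausMap V A)ᴴ * (krausMap V P)⁻¹ * krausMap V A).PosSemidef := by
  have := hP.isUnit.invertible
  have := hVP.isUnit.invertible
  have hblock : (fromBlocks P A Aᴴ (Aᴴ * P⁻¹ * A)).PosSemidef := by
    rw [PosDef.fromBlocks₁₁ A _ hP, sub_self]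
    exact .zero
  have himage := hblock.krausMap (fun k => fromBlocks (V k) 0 0 (V k))
  rwa [krausMap_fromBlocks, ← conjTranspose_krausMap, PosDef.fromBlocks₁₁ _ _ hVP] at himage

theorem trace_conjTranspose_krausMap_mul_inv_mul_le [Fintype m] [DecidableEq m] [DecidableEq n]
    {V : ι → Matrix m n 𝕜} (hV : ∑ k, (V k)ᴴ * V k = 1) {P : Matrix n n 𝕜} (hP : P.PosDef)
    (hVP : (krausMap V P).PosDef) (A : Matrix n n 𝕜) :
    ((krausMap V A)ᴴ * (krausMap V P)⁻¹ * krausMap V A).trace ≤ (Aᴴ * P⁻¹ * A).trace := by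
  have := (posSemidef_krausMap_sub_conjTranspose_mul_inv_mul V hP hVP A).trace_nonneg
  rwa [trace_sub, trace_krausMap hV, sub_nonneg] at this

end Matrix

theorem quadratic_relative_entropy_monotone_general {n m N : ℕ}
    (V : Fin N → Matrix (Fin m) (Fin n) ℂ)
    (hTP : ∑ k, (V k)ᴴ * V k = 1)
    (φ : Matrix (Fin n) (Fin n) ℂ → Matrix (Fin m) (Fin m) ℂ)
    (hφ : ∀ X, φ X = ∑ k, V k * X * (V k)ᴴ)
    (P Q : Matrix (Fin n) (Fin n) ℂ) (hP : P.PosDef) (hQ : Q.PosDef)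
    (hφP : (φ P).PosDef) :
    ((φ Q - φ P) * (φ P)⁻¹ * (φ Q - φ P)).trace ≤
      ((Q - P) * P⁻¹ * (Q - P)).trace := by
  obtain rfl : φ = krausMap V := funext hφ
  have hA : (Q - P)ᴴ = Q - P := (hQ.isHermitian.sub hP.isHermitian).eq
  have key := trace_conjTranspose_krausMap_mul_inv_mul_le hTP hP hφP (Q - P)
  rwa [conjTranspose_krausMap, hA, krausMap_sub] at key

/-- Monotonicity of the quadratic relative entropy under a completely positive
trace-preserving map `φ(X) = Σ_k V_k X V_kᴴ` (with `Σ V_kᴴ V_k = 1`):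
`Tr ((φ(Q)−φ(P)) φ(P)⁻¹ (φ(Q)−φ(P))) ≤ Tr ((Q−P) P⁻¹ (Q−P))`. -/
theorem quadratic_relative_entropy_monotone {n m N : ℕ}
    (V : Fin N → Matrix (Fin m) (Fin n) ℂ)
    (hTP : ∑ k, (V k)ᴴ * V k = 1)
    (φ : Matrix (Fin n) (Fin n) ℂ → Matrix (Fin m) (Fin m) ℂ)
    (hφ : ∀ X, φ X = ∑ k, V k * X * (V k)ᴴ)
    (P Q : Matrix (Fin n) (Fin n) ℂ) (hP : P.PosDef) (hQ : Q.PosDef)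
    (hPtr : P.trace = 1) (hQtr : Q.trace = 1)
    (hφP : (φ P).PosDef) :
    ((φ Q - φ P) * (φ P)⁻¹ * (φ Q - φ P)).trace ≤
      ((Q - P) * P⁻¹ * (Q - P)).trace :=
  quadratic_relative_entropy_monotone_general V hTP φ hφ P Q hP hQ hφP
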